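/- Let κ_β : F₂ → ℝ be defined by κ_β(0) = e^β, κ_β(1) = e^{−β}, and let its Fourier transform be κ̂_β(0) = e^β + e^{−β}, κ̂_β(1) = e^β − e^{−β}. For β > 0 and the dual inverse temperature β̃ = −(1/2)·log(tanh β), it holds that κ̂_β(0) = √(2c_β)·κ_{β̃}(0) and κ̂_β(1) = √(2c_β)·κ_{β̃}(1), where c_β = 2·sinh(β)·cosh(β). -/

import Mathlib

/-- Kramers–Wannier interaction-function identity: with `κ_β(0) = e^β`,
`κ_β(1) = e^{−β}`, Fourier transform `κ̂_β(0) = e^β + e^{−β}`,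
`κ̂_β(1) = e^β − e^{−β}`, dual inverse temperature `β̃ = −(1/2)·log(tanh β)` and
`c_β = 2·sinh β·cosh β`, one has `κ̂_β(0) = √(2c_β)·κ_{β̃}(0)` and
`κ̂_β(1) = √(2c_β)·κ_{β̃}(1)`. -/
theorem stmt_13 (β : ℝ) (hβ : 0 < β) :
    Real.exp β + Real.exp (-β) =
      Real.sqrt (2 * (2 * Real.sinh β * Real.cosh β)) *
        Real.exp (-(1 / 2) * Real.log (Real.tanh β)) ∧
    Real.exp β - Real.exp (-β) =
      Real.sqrt (2 * (2 * Real.sinh β * Real.cosh β)) *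
        Real.exp (-(-(1 / 2) * Real.log (Real.tanh β))) := by
  have hs : 0 < Real.sinh β := Real.sinh_pos_iff.mpr hβ
  have hc : 0 < Real.cosh β := Real.cosh_pos β
  have ht : Real.tanh β = Real.sinh β / Real.cosh β := Real.tanh_eq_sinh_div_cosh β
  have htpos : 0 < Real.tanh β := ht ▸ div_pos hs hc
  have hlog : Real.exp (Real.log (Real.tanh β)) = Real.sinh β / Real.cosh β := by
    rw [Real.exp_log htpos, ht]
  have hE : Real.exp (-(1 / 2) * Real.log (Real.tanh β)) =
      Real.sqrt (Real.cosh β / Real.sinh β) := by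
    have : Real.exp (-(1 / 2) * Real.log (Real.tanh β)) =
        (Real.tanh β) ^ (-(1/2) : ℝ) := by
      rw [Real.rpow_def_of_pos htpos]; ring_nf
    rw [this, Real.rpow_neg htpos.le, ← Real.sqrt_eq_rpow,
      ← Real.sqrt_inv, ht, inv_div]
  have hE' : Real.exp (-(-(1 / 2) * Real.log (Real.tanh β))) =
      Real.sqrt (Real.sinh β / Real.cosh β) := by
    rw [show -(-(1/2 : ℝ) * Real.log (Real.tanh β))
        = (1/2) * Real.log (Real.tanh β) by ring]
    rw [show (1/2 : ℝ) * Real.log (Real.tanh β)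
        = Real.log (Real.tanh β) * (1/2) by ring, ← Real.rpow_def_of_pos htpos,
      ← Real.sqrt_eq_rpow, ht]
  constructor
  · rw [hE, ← Real.sqrt_mul (by positivity),
      show 2 * (2 * Real.sinh β * Real.cosh β) * (Real.cosh β / Real.sinh β)
        = (2 * Real.cosh β)^2 by field_simp,
      Real.sqrt_sq (by positivity), Real.cosh_eq]
    ring
  · rw [hE', ← Real.sqrt_mul (by positivity),
      show 2 * (2 * Real.sinh β * Real.cosh β) * (Real.sinh β / Real.cosh β)
        = (2 * Real.sinh β)^2 by field_simp,
      Real.sqrt_sq (by positivity), Real.sinh_eq]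
    ring
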